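/- arXiv:2006.08191 — 6 statements merged into one kernel-verified Lean document; each statement's English description precedes it below -/
import Mathlib

section
/- Let n ≥ 1 and let h : Fin n → Fin n → Fin n → ℝ be totally symmetric. Define H : Fin n → ℝ by H(m) = (1/n)·Σ_i h(m,i,i), define c(m,i,j) = (n/(n+2))·(H(m)δ_{ij} + H(i)δ_{jm} + H(j)δ_{im}), and set h̃ = h − c. Then h̃ is totally symmetric and trace-free, and Σ_{m,i,j} h̃(m,i,j)² = Σ_{m,i,j} h(m,i,j)² − (3n²/(n+2))·Σ_m H(m)². -/
/-!
Write `δ·v` for the symmetrization `v m δ_{ij} + v i δ_{jm} + v j δ_{im}` of a vector `v`, so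
that `c = (n/(n+2)) δ·H`. Contracting gives `tr (δ·v) = (n+2) v`, and pairing `δ·v` with a totally
symmetric `t` only sees its trace: `⟪t, δ·v⟫ = 3 ⟪tr t, v⟫`. Since `tr h = n H`, the first identity
makes `h̃` trace-free, and expanding `|h - a δ·H|²` with the second gives
`|h|² - 6 a n |H|² + 3 a² (n+2) |H|²`, which is the claim for `a = n/(n+2)`.
-/

namespace Tensor3

variable {ι : Type*}

def IsTotallySymm (t : ι → ι → ι → ℝ) : Prop :=
  (∀ i j k, t i j k = t j i k) ∧ ∀ i j k, t i j k = t i k j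

theorem IsTotallySymm.sub_const_mul {t s : ι → ι → ι → ℝ} (ht : IsTotallySymm t)
    (hs : IsTotallySymm s) (a : ℝ) :
    IsTotallySymm fun m i j => t m i j - a * s m i j :=
  ⟨fun i j k => by simp only [ht.1 i j k, hs.1 i j k],
    fun i j k => by simp only [ht.2 i j k, hs.2 i j k]⟩

section DecidableEq

variable [DecidableEq ι]

def symmDelta (v : ι → ℝ) (m i j : ι) : ℝ :=
  v m * (if i = j then (1 : ℝ) else 0) + v i * (if j = m then (1 : ℝ) else 0)
    + v j * (if i = m then (1 : ℝ) else 0)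

theorem isTotallySymm_symmDelta (v : ι → ℝ) : IsTotallySymm (symmDelta v) := by
  constructor <;> intro i j k <;> simp only [symmDelta, eq_comm] <;> ring

end DecidableEq

variable [Fintype ι]

def trace (t : ι → ι → ι → ℝ) (m : ι) : ℝ := ∑ i, t m i i

theorem card_mul_one_div_card_mul_sum (f : ι → ℝ) :
    (Fintype.card ι : ℝ) * (1 / Fintype.card ι * ∑ i, f i) = ∑ i, f i := by
  rcases isEmpty_or_nonempty ι with hι | hι
  · simp
  · have : (Fintype.card ι : ℝ) ≠ 0 := Nat.cast_ne_zero.mpr Fintype.card_ne_zero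
    field_simp

theorem trace_sub_const_mul (t s : ι → ι → ι → ℝ) (a : ℝ) (m : ι) :
    trace (fun m i j => t m i j - a * s m i j) m = trace t m - a * trace s m := by
  simp only [trace, Finset.sum_sub_distrib, Finset.mul_sum]

theorem IsTotallySymm.sum_diag {t : ι → ι → ι → ℝ} (ht : IsTotallySymm t) (k : ι) :
    ∑ i, t i i k = trace t k :=
  Finset.sum_congr rfl fun i _ => by rw [ht.2, ht.1]

variable [DecidableEq ι]

theorem trace_symmDelta (v : ι → ℝ) (m : ι) :
    trace (symmDelta v) m = (Fintype.card ι + 2) * v m := by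
  simp only [trace, symmDelta, Finset.sum_add_distrib, mul_ite, mul_one, mul_zero,
    Finset.sum_ite_eq', Finset.mem_univ, if_true, Finset.sum_const, Finset.card_univ,
    nsmul_eq_mul]
  ring

theorem IsTotallySymm.sum_mul_symmDelta {t : ι → ι → ι → ℝ} (ht : IsTotallySymm t) (v : ι → ℝ) :
    ∑ m, ∑ i, ∑ j, t m i j * symmDelta v m i j = 3 * ∑ m, trace t m * v m := by
  have hdiag : ∀ j, ∑ i, t i i j * v j = trace t j * v j := fun j => by
    rw [← Finset.sum_mul, ht.sum_diag]
  have hmid : ∀ j, ∑ i, t i j i * v j = trace t j * v j := fun j => by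
    simp only [fun i => ht.1 i j i, ← Finset.sum_mul, trace]
  simp only [symmDelta, mul_add, Finset.sum_add_distrib, mul_ite, mul_one, mul_zero,
    Finset.sum_ite_eq, Finset.sum_ite_eq', Finset.mem_univ, if_true, Finset.sum_ite_irrel,
    Finset.sum_const_zero]
  rw [Finset.sum_comm (f := fun m i => t m i m * v i),
    Finset.sum_comm (f := fun m j => t m m j * v j)]
  simp only [hdiag, hmid, trace, Finset.sum_mul]
  ring

theorem IsTotallySymm.sum_sq_sub_const_mul_symmDelta {t : ι → ι → ι → ℝ} (ht : IsTotallySymm t)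
    (a : ℝ) (v : ι → ℝ) :
    ∑ m, ∑ i, ∑ j, (t m i j - a * symmDelta v m i j) ^ 2
      = ∑ m, ∑ i, ∑ j, t m i j ^ 2 - 6 * a * ∑ m, trace t m * v m
        + 3 * a ^ 2 * (Fintype.card ι + 2) * ∑ m, v m ^ 2 := by
  have hexpand : ∀ m i j, (t m i j - a * symmDelta v m i j) ^ 2
      = t m i j ^ 2 - 2 * a * (t m i j * symmDelta v m i j)
        + a ^ 2 * (symmDelta v m i j * symmDelta v m i j) := fun m i j => by ring
  simp only [hexpand, Finset.sum_add_distrib, Finset.sum_sub_distrib, ← Finset.mul_sum,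
    ht.sum_mul_symmDelta, (isTotallySymm_symmDelta v).sum_mul_symmDelta, trace_symmDelta]
  simp only [mul_assoc, ← sq, ← Finset.mul_sum]
  ring

end Tensor3

open Tensor3 in
theorem traceFree_second_fundamental_form_general (n : ℕ)
    (h : Fin n → Fin n → Fin n → ℝ)
    (hsymm₁ : ∀ i j k, h i j k = h j i k)
    (hsymm₂ : ∀ i j k, h i j k = h i k j) :
    let H : Fin n → ℝ := fun m => (1 / (n : ℝ)) * ∑ i, h m i i
    let c : Fin n → Fin n → Fin n → ℝ := fun m i j =>
      ((n : ℝ) / ((n : ℝ) + 2)) *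
        (H m * (if i = j then (1 : ℝ) else 0) + H i * (if j = m then (1 : ℝ) else 0)
          + H j * (if i = m then (1 : ℝ) else 0))
    let ht : Fin n → Fin n → Fin n → ℝ := fun m i j => h m i j - c m i j
    (∀ i j k, ht i j k = ht j i k) ∧ (∀ i j k, ht i j k = ht i k j) ∧
    (∀ k, ∑ i, ht i i k = 0) ∧
    (∑ m, ∑ i, ∑ j, (ht m i j) ^ 2
      = (∑ m, ∑ i, ∑ j, (h m i j) ^ 2) - (3 * (n : ℝ) ^ 2 / ((n : ℝ) + 2)) * ∑ m, (H m) ^ 2) := by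
  intro H c ht
  have hh : IsTotallySymm h := ⟨hsymm₁, hsymm₂⟩
  have htrace_h : ∀ m, trace h m = n * H m := fun m => by
    have := card_mul_one_div_card_mul_sum fun i => h m i i
    rw [Fintype.card_fin] at this
    exact this.symm
  have hht_eq : ht = fun m i j => h m i j - n / (n + 2) * symmDelta H m i j := rfl
  have hht : IsTotallySymm ht := hh.sub_const_mul (isTotallySymm_symmDelta H) _
  have htrace_ht : ∀ k, trace ht k = 0 := fun k => by
    rw [hht_eq, trace_sub_const_mul h (symmDelta H), trace_symmDelta, htrace_h, Fintype.card_fin]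
    field_simp
    ring
  refine ⟨hht.1, hht.2, fun k => (hht.sum_diag k).trans (htrace_ht k), ?_⟩
  rw [hht_eq, hh.sum_sq_sub_const_mul_symmDelta]
  simp only [htrace_h, Fintype.card_fin, mul_assoc, ← sq, ← Finset.mul_sum]
  field_simp
  ring

/-- For a totally symmetric 3-tensor `h` on `Fin n`, with mean curvature
`H m = (1/n) Σ_i h m i i` and umbilical part
`c m i j = (n/(n+2)) (H m δ_{ij} + H i δ_{jm} + H j δ_{im})`, the tensor `h̃ = h - c`
is totally symmetric, trace-free, and satisfies
`Σ h̃² = Σ h² - (3n²/(n+2)) Σ H²`. -/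
theorem traceFree_second_fundamental_form (n : ℕ) (hn : 1 ≤ n)
    (h : Fin n → Fin n → Fin n → ℝ)
    (hsymm₁ : ∀ i j k, h i j k = h j i k)
    (hsymm₂ : ∀ i j k, h i j k = h i k j) :
    let H : Fin n → ℝ := fun m => (1 / (n : ℝ)) * ∑ i, h m i i
    let c : Fin n → Fin n → Fin n → ℝ := fun m i j =>
      ((n : ℝ) / ((n : ℝ) + 2)) *
        (H m * (if i = j then (1 : ℝ) else 0) + H i * (if j = m then (1 : ℝ) else 0)
          + H j * (if i = m then (1 : ℝ) else 0))
    let ht : Fin n → Fin n → Fin n → ℝ := fun m i j => h m i j - c m i j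
    (∀ i j k, ht i j k = ht j i k) ∧ (∀ i j k, ht i j k = ht i k j) ∧
    (∀ k, ∑ i, ht i i k = 0) ∧
    (∑ m, ∑ i, ∑ j, (ht m i j) ^ 2
      = (∑ m, ∑ i, ∑ j, (h m i j) ^ 2) - (3 * (n : ℝ) ^ 2 / ((n : ℝ) + 2)) * ∑ m, (H m) ^ 2) :=
  traceFree_second_fundamental_form_general n h hsymm₁ hsymm₂
end

section
/- Let n ≥ 1, let h̃ : Fin n → Fin n → Fin n → ℝ be totally symmetric and trace-free, let H : Fin n → ℝ, and define c(m,i,j) = (n/(n+2))·(H(m)δ_{ij} + H(i)δ_{jm} + H(j)δ_{im}). Then Σ_{i,j,k,l,m,t} h̃(m,i,j)·h̃(m,k,l)·h̃(t,l,j)·c(t,i,k) = (3n/(n+2))·Σ_{j,k,l,m,t} h̃(m,j,k)·h̃(m,k,l)·h̃(t,l,j)·H(t). -/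
open BigOperators

private lemma ite_sum_pull {α : Type*} [Fintype α] (c : Prop) [Decidable c] (f : α → ℝ) :
    (∑ x, if c then f x else 0) = if c then ∑ x, f x else 0 := by
  split <;> simp

theorem contraction_I_a (n : ℕ) (hn : 1 ≤ n)
    (ht : Fin n → Fin n → Fin n → ℝ)
    (hsymm₁ : ∀ i j k, ht i j k = ht j i k)
    (hsymm₂ : ∀ i j k, ht i j k = ht i k j)
    (htf : ∀ k, ∑ i, ht i i k = 0)
    (H : Fin n → ℝ) :
    let c : Fin n → Fin n → Fin n → ℝ := fun m i j =>
      ((n : ℝ) / ((n : ℝ) + 2)) *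
        (H m * (if i = j then (1 : ℝ) else 0) + H i * (if j = m then (1 : ℝ) else 0)
          + H j * (if i = m then (1 : ℝ) else 0))
    ∑ i, ∑ j, ∑ k, ∑ l, ∑ m, ∑ t, ht m i j * ht m k l * ht t l j * c t i k
      = (3 * (n : ℝ) / ((n : ℝ) + 2)) *
        ∑ j, ∑ k, ∑ l, ∑ m, ∑ t, ht m j k * ht m k l * ht t l j * H t := by
  intro c
  set K : ℝ := (n : ℝ) / ((n : ℝ) + 2) with hK
  -- full symmetry consequences
  have h3 : ∀ i j k, ht i j k = ht j k i := fun i j k => by rw [hsymm₁, hsymm₂]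
  -- Step 1: expand c and split deltas
  have step1 : ∑ i, ∑ j, ∑ k, ∑ l, ∑ m, ∑ t, ht m i j * ht m k l * ht t l j * c t i k
      = (∑ i, ∑ j, ∑ k, ∑ l, ∑ m, ∑ t,
          (if i = k then K * (ht m i j * ht m k l * ht t l j * H t) else 0))
        + (∑ i, ∑ j, ∑ k, ∑ l, ∑ m, ∑ t,
          (if k = t then K * (ht m i j * ht m k l * ht t l j * H i) else 0))
        + (∑ i, ∑ j, ∑ k, ∑ l, ∑ m, ∑ t,
          (if i = t then K * (ht m i j * ht m k l * ht t l j * H k) else 0)) := by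
    simp only [← Finset.sum_add_distrib]
    refine Finset.sum_congr rfl fun i _ => Finset.sum_congr rfl fun j _ =>
      Finset.sum_congr rfl fun k _ => Finset.sum_congr rfl fun l _ =>
      Finset.sum_congr rfl fun m _ => Finset.sum_congr rfl fun t _ => ?_
    simp only [c]
    split_ifs <;> ring
  rw [step1]
  -- collapse the deltas
  have e1 : (∑ i, ∑ j, ∑ k, ∑ l, ∑ m, ∑ t,
        (if i = k then K * (ht m i j * ht m k l * ht t l j * H t) else 0))
      = ∑ i, ∑ j, ∑ l, ∑ m, ∑ t, K * (ht m i j * ht m i l * ht t l j * H t) := by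
    simp [ite_sum_pull, Finset.sum_ite_eq]
  have e2 : (∑ i, ∑ j, ∑ k, ∑ l, ∑ m, ∑ t,
        (if k = t then K * (ht m i j * ht m k l * ht t l j * H i) else 0))
      = ∑ i, ∑ j, ∑ k, ∑ l, ∑ m, K * (ht m i j * ht m k l * ht k l j * H i) := by
    simp [Finset.sum_ite_eq]
  have e3 : (∑ i, ∑ j, ∑ k, ∑ l, ∑ m, ∑ t,
        (if i = t then K * (ht m i j * ht m k l * ht t l j * H k) else 0))
      = ∑ i, ∑ j, ∑ k, ∑ l, ∑ m, K * (ht m i j * ht m k l * ht i l j * H k) := by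
    simp [Finset.sum_ite_eq]
  rw [e1, e2, e3]
  -- target inner sum
  set S : ℝ := ∑ j, ∑ k, ∑ l, ∑ m, ∑ t, K * (ht m j k * ht m k l * ht t l j * H t) with hS
  -- flatten to product sums and reindex
  have q1 : (∑ i, ∑ j, ∑ l, ∑ m, ∑ t, K * (ht m i j * ht m i l * ht t l j * H t)) = S := by
    rw [hS]
    simp only [← Fintype.sum_prod_type']
    exact Fintype.sum_equiv
      ⟨fun p => (p.2.1, p.1, p.2.2.1, p.2.2.2.1, p.2.2.2.2),
       fun p => (p.2.1, p.1, p.2.2.1, p.2.2.2.1, p.2.2.2.2),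
       fun ⟨a,b,c,d,e⟩ => rfl, fun ⟨a,b,c,d,e⟩ => rfl⟩ _ _
      (fun ⟨i,j,l,m,t⟩ => by
        dsimp only [Equiv.coe_fn_mk]
        rw [hsymm₂ m j i])
  have q2 : (∑ i, ∑ j, ∑ k, ∑ l, ∑ m, K * (ht m i j * ht m k l * ht k l j * H i)) = S := by
    rw [hS]
    simp only [← Fintype.sum_prod_type']
    exact Fintype.sum_equiv
      ⟨fun p => (p.2.2.2.2, p.2.2.2.1, p.2.1, p.2.2.1, p.1),
       fun p => (p.2.2.2.2, p.2.2.1, p.2.2.2.1, p.2.1, p.1),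
       fun ⟨a,b,c,d,e⟩ => rfl, fun ⟨a,b,c,d,e⟩ => rfl⟩ _ _
      (fun ⟨i,j,k,l,m⟩ => by
        dsimp only [Equiv.coe_fn_mk]
        rw [show ht k m l = ht m k l from hsymm₁ k m l,
            show ht i j m = ht m i j from (h3 m i j).symm]
        ring)
  have q3 : (∑ i, ∑ j, ∑ k, ∑ l, ∑ m, K * (ht m i j * ht m k l * ht i l j * H k)) = S := by
    rw [hS]
    simp only [← Fintype.sum_prod_type']
    exact Fintype.sum_equiv
      ⟨fun p => (p.2.2.2.2, p.2.1, p.2.2.2.1, p.1, p.2.2.1),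
       fun p => (p.2.2.2.1, p.2.1, p.2.2.2.2, p.2.2.1, p.1),
       fun ⟨a,b,c,d,e⟩ => rfl, fun ⟨a,b,c,d,e⟩ => rfl⟩ _ _
      (fun ⟨i,j,k,l,m⟩ => by
        dsimp only [Equiv.coe_fn_mk]
        rw [show ht i m j = ht m i j from hsymm₁ i m j,
            show ht i j l = ht i l j from hsymm₂ i j l,
            show ht k l m = ht m k l from h3 m k l |>.symm]
        ring)
  rw [q1, q2, q3]
  have : (3 * (n : ℝ) / ((n : ℝ) + 2)) *
      (∑ j, ∑ k, ∑ l, ∑ m, ∑ t, ht m j k * ht m k l * ht t l j * H t) = 3 * S := by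
    rw [hS]
    simp only [Finset.mul_sum]
    refine Finset.sum_congr rfl fun j _ => Finset.sum_congr rfl fun k _ =>
      Finset.sum_congr rfl fun l _ => Finset.sum_congr rfl fun m _ =>
      Finset.sum_congr rfl fun t _ => ?_
    rw [hK]; ring
  rw [this]; ring
end

section
/- Let n ≥ 1, let h̃ : Fin n → Fin n → Fin n → ℝ be totally symmetric and trace-free, let H : Fin n → ℝ, and define c(m,i,j) = (n/(n+2))·(H(m)δ_{ij} + H(i)δ_{jm} + H(j)δ_{im}). Then Σ_{i,j,k,l,m,t} h̃(m,i,j)·h̃(m,k,l)·h̃(t,l,k)·c(t,i,j) = (2n/(n+2))·Σ_{j,k,l,m,t} h̃(m,j,k)·h̃(m,k,l)·h̃(t,l,j)·H(t). -/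
open BigOperators

theorem contraction_I_b (n : ℕ) (hn : 1 ≤ n)
    (ht : Fin n → Fin n → Fin n → ℝ)
    (hsymm₁ : ∀ i j k, ht i j k = ht j i k)
    (hsymm₂ : ∀ i j k, ht i j k = ht i k j)
    (htf : ∀ k, ∑ i, ht i i k = 0)
    (H : Fin n → ℝ) :
    let c : Fin n → Fin n → Fin n → ℝ := fun m i j =>
      ((n : ℝ) / ((n : ℝ) + 2)) *
        (H m * (if i = j then (1 : ℝ) else 0) + H i * (if j = m then (1 : ℝ) else 0)
          + H j * (if i = m then (1 : ℝ) else 0))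
    ∑ i, ∑ j, ∑ k, ∑ l, ∑ m, ∑ t, ht m i j * ht m k l * ht t l k * c t i j
      = (2 * (n : ℝ) / ((n : ℝ) + 2)) *
        ∑ j, ∑ k, ∑ l, ∑ m, ∑ t, ht m j k * ht m k l * ht t l j * H t := by
  intro c
  set K : ℝ := (n : ℝ) / ((n : ℝ) + 2) with hKdef
  have hcyc : ∀ a b d : Fin n, ht a b d = ht b d a := fun a b d => by
    rw [hsymm₁, hsymm₂]
  have hswap : ∀ a b d : Fin n, ht a b d = ht d b a := fun a b d => by
    rw [hsymm₁, hsymm₂, hsymm₁]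
  -- key contraction over the first two indices
  have key : ∀ m t : Fin n, ∑ i, ∑ j, ht m i j * c t i j
      = K * (2 * ∑ i, ht m i t * H i) := by
    intro m t
    simp only [c, mul_add, mul_ite, ite_mul, mul_zero, zero_mul, mul_one,
      Finset.sum_add_distrib, Finset.sum_ite_eq, Finset.sum_ite_eq',
      Finset.mem_univ, if_true, Finset.mul_sum, Finset.sum_mul]
    have hz : ∑ x, ht m x x * (K * H t) = 0 := by
      have h0 : ∑ x, ht m x x * (K * H t) = (∑ x, ht x x m) * (K * H t) := by
        rw [Finset.sum_mul]
        exact Finset.sum_congr rfl fun x _ => by rw [hsymm₁, hsymm₂]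
      rw [h0, htf, zero_mul]
    have hcol : ∑ x : Fin n, ∑ y : Fin n, (if x = t then ht m x y * (K * H y) else 0)
        = ∑ y : Fin n, ht m t y * (K * H y) := by
      have h1 : ∀ x : Fin n, ∑ y : Fin n, (if x = t then ht m x y * (K * H y) else 0)
          = if x = t then ∑ y : Fin n, ht m x y * (K * H y) else 0 := by
        intro x; split <;> simp
      rw [Finset.sum_congr rfl fun x _ => h1 x, Finset.sum_ite_eq' Finset.univ t
        (fun x => ∑ y : Fin n, ht m x y * (K * H y))]
      simp
    rw [hz, hcol, zero_add, ← Finset.sum_add_distrib]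
    refine Finset.sum_congr rfl fun x _ => ?_
    rw [hsymm₂ m t x]
    ring
  -- reorder the six sums so that i, j are innermost
  have reorder : ∀ f : Fin n → Fin n → Fin n → Fin n → Fin n → Fin n → ℝ,
      ∑ i, ∑ j, ∑ k, ∑ l, ∑ m, ∑ t, f i j k l m t
        = ∑ k, ∑ l, ∑ m, ∑ t, ∑ i, ∑ j, f i j k l m t := by
    intro f
    have h1 : ∑ p : Fin n × Fin n × Fin n × Fin n × Fin n × Fin n,
            f p.1 p.2.1 p.2.2.1 p.2.2.2.1 p.2.2.2.2.1 p.2.2.2.2.2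
        = ∑ i, ∑ j, ∑ k, ∑ l, ∑ m, ∑ t, f i j k l m t := by
      simp only [Fintype.sum_prod_type]
    have h2 : ∑ q : Fin n × Fin n × Fin n × Fin n × Fin n × Fin n,
            f q.2.2.2.2.1 q.2.2.2.2.2 q.1 q.2.1 q.2.2.1 q.2.2.2.1
        = ∑ k, ∑ l, ∑ m, ∑ t, ∑ i, ∑ j, f i j k l m t := by
      simp only [Fintype.sum_prod_type]
    rw [← h1, ← h2]
    exact Fintype.sum_equiv
      ⟨fun p => (p.2.2.1, p.2.2.2.1, p.2.2.2.2.1, p.2.2.2.2.2, p.1, p.2.1),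
       fun q => (q.2.2.2.2.1, q.2.2.2.2.2, q.1, q.2.1, q.2.2.1, q.2.2.2.1),
       fun p => rfl, fun q => rfl⟩ _ _ (fun p => rfl)
  rw [reorder]
  -- apply the key contraction
  have step : ∀ k l m t : Fin n,
      ∑ i, ∑ j, ht m i j * ht m k l * ht t l k * c t i j
        = 2 * K * ∑ i, ht m k l * ht t l k * ht m i t * H i := by
    intro k l m t
    have hfac : ∑ i, ∑ j, ht m i j * ht m k l * ht t l k * c t i j
        = ht m k l * ht t l k * ∑ i, ∑ j, ht m i j * c t i j := by
      rw [Finset.mul_sum]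
      refine Finset.sum_congr rfl fun i _ => ?_
      rw [Finset.mul_sum]
      exact Finset.sum_congr rfl fun j _ => by ring
    rw [hfac, key m t]
    have : ht m k l * ht t l k * (K * (2 * ∑ i, ht m i t * H i))
        = (ht m k l * ht t l k * (K * 2)) * ∑ i, ht m i t * H i := by ring
    rw [this, Finset.mul_sum, Finset.mul_sum]
    exact Finset.sum_congr rfl fun i _ => by ring
  have happ : ∑ k, ∑ l, ∑ m, ∑ t, ∑ i, ∑ j, ht m i j * ht m k l * ht t l k * c t i j
      = ∑ k, ∑ l, ∑ m, ∑ t, 2 * K * ∑ i, ht m k l * ht t l k * ht m i t * H i :=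
    Finset.sum_congr rfl fun k _ => Finset.sum_congr rfl fun l _ =>
      Finset.sum_congr rfl fun m _ => Finset.sum_congr rfl fun t _ => step k l m t
  rw [happ]
  -- pull the constant out
  have hpull : ∑ k, ∑ l, ∑ m, ∑ t, 2 * K * ∑ i, ht m k l * ht t l k * ht m i t * H i
      = 2 * K * ∑ k, ∑ l, ∑ m, ∑ t, ∑ i, ht m k l * ht t l k * ht m i t * H i := by
    rw [Finset.mul_sum]
    refine Finset.sum_congr rfl fun k _ => ?_
    rw [Finset.mul_sum]
    refine Finset.sum_congr rfl fun l _ => ?_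
    rw [Finset.mul_sum]
    refine Finset.sum_congr rfl fun m _ => ?_
    rw [Finset.mul_sum]
  rw [hpull]
  -- rename the five summation variables
  have hrename : ∑ k, ∑ l, ∑ m, ∑ t, ∑ i, ht m k l * ht t l k * ht m i t * H i
      = ∑ j, ∑ k, ∑ l, ∑ m, ∑ t, ht m j k * ht m k l * ht t l j * H t := by
    have h1 : ∑ p : Fin n × Fin n × Fin n × Fin n × Fin n,
            ht p.2.2.1 p.1 p.2.1 * ht p.2.2.2.1 p.2.1 p.1
              * ht p.2.2.1 p.2.2.2.2 p.2.2.2.1 * H p.2.2.2.2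
        = ∑ k, ∑ l, ∑ m, ∑ t, ∑ i, ht m k l * ht t l k * ht m i t * H i := by
      simp only [Fintype.sum_prod_type]
    have h2 : ∑ q : Fin n × Fin n × Fin n × Fin n × Fin n,
            ht q.2.2.2.1 q.1 q.2.1 * ht q.2.2.2.1 q.2.1 q.2.2.1
              * ht q.2.2.2.2 q.2.2.1 q.1 * H q.2.2.2.2
        = ∑ j, ∑ k, ∑ l, ∑ m, ∑ t, ht m j k * ht m k l * ht t l j * H t := by
      simp only [Fintype.sum_prod_type]
    rw [← h1, ← h2]
    refine Fintype.sum_equiv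
      ⟨fun p => (p.2.2.1, p.2.1, p.2.2.2.1, p.1, p.2.2.2.2),
       fun q => (q.2.2.2.1, q.2.1, q.1, q.2.2.1, q.2.2.2.2),
       fun p => rfl, fun q => rfl⟩ _ _ ?_
    rintro ⟨a, b, cc, d, e⟩
    show ht cc a b * ht d b a * ht cc e d * H e = ht a cc b * ht a b d * ht e d cc * H e
    rw [hsymm₁ a cc b, hswap a b d, hcyc e d cc, hcyc d cc e]
  rw [hrename, hKdef, mul_div_assoc]
end

section
/- Let n ≥ 1, let h̃ : Fin n → Fin n → Fin n → ℝ be totally symmetric and trace-free, let H : Fin n → ℝ, and define c(m,i,j) = (n/(n+2))·(H(m)δ_{ij} + H(i)δ_{jm} + H(j)δ_{im}). Then Σ_{i,j,k,l,m,t} h̃(m,i,j)·h̃(m,k,l)·c(t,l,k)·c(t,i,j) = (4n²/(n+2)²)·Σ_{i,j,k,m} h̃(m,i,j)·h̃(m,j,k)·H(i)·H(k). -/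
open BigOperators

theorem contraction_I_d (n : ℕ) (hn : 1 ≤ n)
    (ht : Fin n → Fin n → Fin n → ℝ)
    (hsymm₁ : ∀ i j k, ht i j k = ht j i k)
    (hsymm₂ : ∀ i j k, ht i j k = ht i k j)
    (htf : ∀ k, ∑ i, ht i i k = 0)
    (H : Fin n → ℝ) :
    let c : Fin n → Fin n → Fin n → ℝ := fun m i j =>
      ((n : ℝ) / ((n : ℝ) + 2)) *
        (H m * (if i = j then (1 : ℝ) else 0) + H i * (if j = m then (1 : ℝ) else 0)
          + H j * (if i = m then (1 : ℝ) else 0))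
    ∑ i, ∑ j, ∑ k, ∑ l, ∑ m, ∑ t, ht m i j * ht m k l * c t l k * c t i j
      = (4 * (n : ℝ) ^ 2 / ((n : ℝ) + 2) ^ 2) *
        ∑ i, ∑ j, ∑ k, ∑ m, ht m i j * ht m j k * H i * H k := by
  intro c
  set a : ℝ := (n : ℝ) / ((n : ℝ) + 2) with ha
  have tr : ∀ m, ∑ i, ht m i i = 0 := by
    intro m
    calc ∑ i, ht m i i = ∑ i, ht i i m :=
          Finset.sum_congr rfl fun i _ => by rw [hsymm₁, hsymm₂]
      _ = 0 := htf m
  set f : Fin n → Fin n → ℝ := fun m t => ∑ i, ht m i t * H i with hf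
  have key : ∀ m t, ∑ i, ∑ j, ht m i j * c t i j = 2 * a * f m t := by
    intro m t
    have inner : ∀ i, ∑ j, ht m i j * c t i j
        = a * (ht m i i * H t) + a * (ht m i t * H i)
          + (if i = t then a * ∑ j, ht m i j * H j else 0) := by
      intro i
      have : ∀ j, ht m i j * c t i j
          = a * (ht m i j * H t) * (if i = j then 1 else 0)
            + a * (ht m i j * H i) * (if j = t then 1 else 0)
            + (if i = t then a * (ht m i j * H j) else 0) := by
        intro j
        simp only [c, mul_ite, mul_one, mul_zero, ite_mul, zero_mul, mul_add]
        split_ifs <;> ring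
      simp only [this, Finset.sum_add_distrib, Finset.sum_ite_eq, Finset.sum_ite_eq',
        Finset.mem_univ, if_true, mul_ite, mul_one, mul_zero]
      by_cases h : i = t <;> simp [h, Finset.mul_sum]
    rw [Finset.sum_congr rfl fun i _ => inner i]
    simp only [Finset.sum_add_distrib, Finset.sum_ite_eq', Finset.mem_univ, if_true]
    rw [show ∑ i, a * (ht m i i * H t) = a * H t * ∑ i, ht m i i by
      rw [Finset.mul_sum]; exact Finset.sum_congr rfl fun i _ => by ring, tr m]
    have e1 : ∑ j, ht m t j * H j = f m t := by
      simp only [hf]; exact Finset.sum_congr rfl fun j _ => by rw [hsymm₂]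
    have e2 : ∑ i, a * (ht m i t * H i) = a * f m t := by
      rw [hf, Finset.mul_sum]
    rw [e1, e2]
    ring
  have key2 : ∀ m t, ∑ k, ∑ l, ht m k l * c t l k = 2 * a * f m t := by
    intro m t
    rw [Finset.sum_comm]
    rw [show (∑ l, ∑ k, ht m k l * c t l k) = ∑ i, ∑ j, ht m i j * c t i j from
      Finset.sum_congr rfl fun l _ => Finset.sum_congr rfl fun k _ => by rw [hsymm₂ m k l]]
    exact key m t
  -- reorder and factor the LHS
  have swapL : ∑ i, ∑ j, ∑ k, ∑ l, ∑ m, ∑ t, ht m i j * ht m k l * c t l k * c t i j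
      = ∑ m, ∑ t, ∑ i, ∑ j, ∑ k, ∑ l, ht m i j * ht m k l * c t l k * c t i j := by
    conv_lhs => enter [2, i, 2, j, 2, k]; rw [Finset.sum_comm]
    conv_lhs => enter [2, i, 2, j]; rw [Finset.sum_comm]
    conv_lhs => enter [2, i]; rw [Finset.sum_comm]
    rw [Finset.sum_comm]
    conv_lhs => enter [2, m, 2, i, 2, j, 2, k]; rw [Finset.sum_comm]
    conv_lhs => enter [2, m, 2, i, 2, j]; rw [Finset.sum_comm]
    conv_lhs => enter [2, m, 2, i]; rw [Finset.sum_comm]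
    conv_lhs => enter [2, m]; rw [Finset.sum_comm]
  have factorGen : ∀ (A B : Fin n → Fin n → ℝ),
      (∑ i, ∑ j, ∑ k, ∑ l, A i j * A k l * B l k * B i j)
      = (∑ i, ∑ j, A i j * B i j) * (∑ k, ∑ l, A k l * B l k) := by
    intro A B
    rw [Finset.sum_mul_sum]
    refine Finset.sum_congr rfl fun i _ => ?_
    conv_rhs => enter [2, k]; rw [Finset.sum_mul_sum]
    rw [Finset.sum_comm]
    exact Finset.sum_congr rfl fun k _ => Finset.sum_congr rfl fun j _ =>
      Finset.sum_congr rfl fun l _ => by ring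
  have factor : ∀ m t, (∑ i, ∑ j, ∑ k, ∑ l, ht m i j * ht m k l * c t l k * c t i j)
      = (∑ i, ∑ j, ht m i j * c t i j) * (∑ k, ∑ l, ht m k l * c t l k) :=
    fun m t => factorGen (ht m) (c t)
  rw [swapL]
  rw [Finset.sum_congr rfl fun m _ => Finset.sum_congr rfl fun t _ => by
    rw [factor m t, key m t, key2 m t]]
  -- reorder and factor the RHS
  have swapR : ∑ i, ∑ j, ∑ k, ∑ m, ht m i j * ht m j k * H i * H k
      = ∑ m, ∑ j, ∑ i, ∑ k, ht m i j * ht m j k * H i * H k := by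
    conv_lhs => enter [2, i, 2, j]; rw [Finset.sum_comm]
    conv_lhs => enter [2, i]; rw [Finset.sum_comm]
    rw [Finset.sum_comm]
    conv_lhs => enter [2, m]; rw [Finset.sum_comm]
  rw [swapR]
  have factorR : ∀ m j, (∑ i, ∑ k, ht m i j * ht m j k * H i * H k) = f m j * f m j := by
    intro m j
    have e3 : f m j = ∑ k, ht m j k * H k := by
      simp only [hf]; exact Finset.sum_congr rfl fun k _ => by rw [hsymm₂ m j k, hsymm₂ m k j]
    have e4 : (∑ i, ht m i j * H i) = f m j := rfl
    calc ∑ i, ∑ k, ht m i j * ht m j k * H i * H k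
        = (∑ i, ht m i j * H i) * (∑ k, ht m j k * H k) := by
          rw [Finset.sum_mul_sum]
          exact Finset.sum_congr rfl fun i _ => Finset.sum_congr rfl fun k _ => by ring
      _ = f m j * f m j := by rw [e4, ← e3]
  rw [Finset.sum_congr rfl fun m _ => Finset.sum_congr rfl fun j _ => factorR m j]
  rw [Finset.mul_sum]
  refine Finset.sum_congr rfl fun m _ => ?_
  rw [Finset.mul_sum]
  refine Finset.sum_congr rfl fun t _ => ?_
  have hne : ((n : ℝ) + 2) ≠ 0 := by positivity
  rw [ha]
  field_simp
  ring
end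

section
/- Let n ≥ 1, let h̃ : Fin n → Fin n → Fin n → ℝ be totally symmetric and trace-free, let H : Fin n → ℝ, and define c(m,i,j) = (n/(n+2))·(H(m)δ_{ij} + H(i)δ_{jm} + H(j)δ_{im}). Then Σ_{i,j,k,l,m,t} h̃(m,i,j)·h̃(m,l,i)·h̃(t,l,k)·c(t,k,j) = (2n/(n+2))·Σ_{i,j,l,m,t} h̃(m,i,j)·h̃(m,l,i)·h̃(t,l,j)·H(t). -/
open BigOperators

theorem contraction_II_b (n : ℕ) (hn : 1 ≤ n)
    (ht : Fin n → Fin n → Fin n → ℝ)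
    (hsymm₁ : ∀ i j k, ht i j k = ht j i k)
    (hsymm₂ : ∀ i j k, ht i j k = ht i k j)
    (htf : ∀ k, ∑ i, ht i i k = 0)
    (H : Fin n → ℝ) :
    let c : Fin n → Fin n → Fin n → ℝ := fun m i j =>
      ((n : ℝ) / ((n : ℝ) + 2)) *
        (H m * (if i = j then (1 : ℝ) else 0) + H i * (if j = m then (1 : ℝ) else 0)
          + H j * (if i = m then (1 : ℝ) else 0))
    ∑ i, ∑ j, ∑ k, ∑ l, ∑ m, ∑ t, ht m i j * ht m l i * ht t l k * c t k j
      = (2 * (n : ℝ) / ((n : ℝ) + 2)) *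
        ∑ i, ∑ j, ∑ l, ∑ m, ∑ t, ht m i j * ht m l i * ht t l j * H t := by
  intro c
  set C : ℝ := (n : ℝ) / ((n : ℝ) + 2) with hC
  have hsymm₃ : ∀ i j k, ht i j k = ht k j i := by
    intro i j k; rw [hsymm₁, hsymm₂, hsymm₁]
  have htf' : ∀ l, ∑ k, ht k l k = 0 := by
    intro l
    calc ∑ k, ht k l k = ∑ k, ht k k l :=
          Finset.sum_congr rfl fun k _ => by rw [hsymm₂]
      _ = 0 := htf l
  have swap3 : ∀ (g : Fin n → Fin n → Fin n → ℝ),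
      (∑ k, ∑ l, ∑ m, g k l m) = ∑ l, ∑ m, ∑ k, g k l m := by
    intro g; rw [Finset.sum_comm]; exact Finset.sum_congr rfl fun l _ => Finset.sum_comm
  -- Step 1: collapse the innermost t-sum
  have h1 : ∀ i j k l m, ∑ t, ht m i j * ht m l i * ht t l k * c t k j
      = C * ((if k = j then (1:ℝ) else 0) * ∑ t, ht m i j * ht m l i * ht t l k * H t)
        + C * (ht m i j * ht m l i * ht j l k * H k)
        + C * (ht m i j * ht m l i * ht k l k * H j) := by
    intro i j k l m
    have point : ∀ t, ht m i j * ht m l i * ht t l k * c t k j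
        = C * ((if k = j then (1:ℝ) else 0) * (ht m i j * ht m l i * ht t l k * H t))
          + C * (if t = j then ht m i j * ht m l i * ht t l k * H k else 0)
          + C * (if t = k then ht m i j * ht m l i * ht t l k * H j else 0) := by
      intro t
      simp only [c]
      by_cases h1 : k = j <;> by_cases h2 : j = t <;> by_cases h3 : k = t <;>
        simp [h1, h2, h3, eq_comm] <;> ring
    simp_rw [point]
    rw [Finset.sum_add_distrib, Finset.sum_add_distrib, ← Finset.mul_sum,
      ← Finset.mul_sum, ← Finset.mul_sum, ← Finset.mul_sum,
      Fintype.sum_ite_eq' j (fun t => ht m i j * ht m l i * ht t l k * H k),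
      Fintype.sum_ite_eq' k (fun t => ht m i j * ht m l i * ht t l k * H j)]
  simp_rw [h1, Finset.sum_add_distrib, ← Finset.mul_sum]
  -- name the three blocks
  set S : ℝ := ∑ i, ∑ j, ∑ l, ∑ m, ∑ t, ht m i j * ht m l i * ht t l j * H t with hS
  -- T1
  have hT1 : (∑ i, ∑ j, ∑ k,
      (if k = j then (1:ℝ) else 0) * ∑ l, ∑ m, ∑ t, ht m i j * ht m l i * ht t l k * H t) = S := by
    rw [hS]
    refine Finset.sum_congr rfl fun i _ => Finset.sum_congr rfl fun j _ => ?_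
    simp_rw [boole_mul]
    rw [Fintype.sum_ite_eq' j
      (fun k => ∑ l, ∑ m, ∑ t, ht m i j * ht m l i * ht t l k * H t)]
  -- T2
  have hT2 : (∑ i, ∑ j, ∑ k, ∑ l, ∑ m, ht m i j * ht m l i * ht j l k * H k) = S := by
    rw [hS]
    refine Finset.sum_congr rfl fun i _ => Finset.sum_congr rfl fun j _ => ?_
    rw [swap3 (fun k l m => ht m i j * ht m l i * ht j l k * H k)]
    exact Finset.sum_congr rfl fun l _ => Finset.sum_congr rfl fun m _ =>
      Finset.sum_congr rfl fun k _ => by rw [hsymm₃ j l k]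
  -- T3
  have hT3 : (∑ i, ∑ j, ∑ k, ∑ l, ∑ m, ht m i j * ht m l i * ht k l k * H j) = 0 := by
    refine Finset.sum_eq_zero fun i _ => Finset.sum_eq_zero fun j _ => ?_
    rw [swap3 (fun k l m => ht m i j * ht m l i * ht k l k * H j)]
    refine Finset.sum_eq_zero fun l _ => Finset.sum_eq_zero fun m _ => ?_
    have : ∀ k, ht m i j * ht m l i * ht k l k * H j
        = (ht m i j * ht m l i * H j) * ht k l k := fun k => by ring
    simp_rw [this, ← Finset.mul_sum, htf' l, mul_zero]
  rw [hT1, hT2, hT3, mul_zero, add_zero, hC]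
  ring
end

section
/- Let n ≥ 1, let h̃ : Fin n → Fin n → Fin n → ℝ be totally symmetric and trace-free, let H : Fin n → ℝ, and define c(m,i,j) = (n/(n+2))·(H(m)δ_{ij} + H(i)δ_{jm} + H(j)δ_{im}). Then Σ_{i,j,k,l,m,t} h̃(m,i,j)·h̃(m,l,i)·c(t,l,k)·c(t,k,j) = (2n²/(n+2)²)·‖h̃‖²·‖H‖² + ((n+6)·n²/(n+2)²)·Σ_{i,j,l,m} h̃(m,i,j)·h̃(m,l,i)·H(j)·H(l), where ‖h̃‖² = Σ_{m,i,j} h̃(m,i,j)² and ‖H‖² = Σ_i H(i)². -/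
open Finset

/-!
Contracting the two copies of `c` over `k` and `t` leaves `(n/(n+2))² (2 ‖H‖² δₗⱼ + (n + 6) Hₗ Hⱼ)`;
against `h̃ₘᵢⱼ h̃ₘₗᵢ` the `δₗⱼ` term gives `‖h̃‖²` by the symmetry of `h̃` in its last two slots.
-/

section Contraction

variable {ι : Type*} [Fintype ι]

theorem sum_six_eq_sum_four_mul_sum_two (A : ι → ι → ι → ι → ℝ) (B : ι → ι → ι → ι → ℝ) :
    ∑ i, ∑ j, ∑ k, ∑ l, ∑ m, ∑ t, A i j l m * B l j k t
      = ∑ i, ∑ j, ∑ l, ∑ m, A i j l m * ∑ k, ∑ t, B l j k t := by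
  simp only [mul_sum]
  refine sum_congr rfl fun i _ => sum_congr rfl fun j _ => ?_
  rw [sum_comm]
  exact sum_congr rfl fun l _ => sum_comm

variable [DecidableEq ι]

-- The tensor `c` of the theorem is `n / (n + 2)` times this.
def symmetrizedDelta (H : ι → ℝ) (m i j : ι) : ℝ :=
  H m * (if i = j then 1 else 0) + H i * (if j = m then 1 else 0)
    + H j * (if i = m then 1 else 0)

theorem sum_symmetrizedDelta_mul_symmetrizedDelta (H : ι → ℝ) (l j : ι) :
    ∑ k, ∑ t, symmetrizedDelta H t l k * symmetrizedDelta H t k j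
      = 2 * (∑ i, H i ^ 2) * (if l = j then 1 else 0)
        + (Fintype.card ι + 6) * H l * H j := by
  simp only [symmetrizedDelta, add_mul, mul_add, sum_add_distrib, mul_ite, ite_mul, mul_one,
    mul_zero, zero_mul, sum_ite_eq, sum_ite_eq', mem_univ, if_true]
  rw [sum_comm]
  simp only [sum_ite_eq, sum_ite_eq', mem_univ, if_true, sum_add_distrib, sum_const,
    card_univ, nsmul_eq_mul]
  by_cases h : l = j
  · subst h
    simp only [if_true, ← pow_two]
    ring
  · simp only [h, if_false, sum_const_zero]
    ring

theorem sum_smul_symmetrizedDelta_mul_smul_symmetrizedDelta (a : ℝ) (H : ι → ℝ) (l j : ι) :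
    ∑ k, ∑ t, a * symmetrizedDelta H t l k * (a * symmetrizedDelta H t k j)
      = a ^ 2 * (2 * (∑ i, H i ^ 2) * (if l = j then 1 else 0)
        + (Fintype.card ι + 6) * H l * H j) := by
  simp only [mul_mul_mul_comm a, ← pow_two, ← mul_sum,
    sum_symmetrizedDelta_mul_symmetrizedDelta]

theorem sum_contract_delta_add_outer (ht : ι → ι → ι → ℝ)
    (hsymm : ∀ i j k, ht i j k = ht i k j) (H : ι → ℝ) (α β : ℝ) :
    ∑ i, ∑ j, ∑ l, ∑ m, ht m i j * ht m l i * (α * (if l = j then 1 else 0) + β * H l * H j)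
      = α * ∑ m, ∑ i, ∑ j, ht m i j ^ 2
        + β * ∑ i, ∑ j, ∑ l, ∑ m, ht m i j * ht m l i * H j * H l := by
  have hpoint : ∀ i j l m, ht m i j * ht m l i * (α * (if l = j then 1 else 0) + β * H l * H j)
      = α * (if l = j then ht m i j * ht m l i else 0) + β * (ht m i j * ht m l i * H j * H l) := by
    intro i j l m
    split_ifs <;> ring
  have hdiag : ∑ i, ∑ j, ∑ m, ht m i j * ht m j i = ∑ m, ∑ i, ∑ j, ht m i j ^ 2 := by
    have hsq : ∀ i j m, ht m i j * ht m j i = ht m i j ^ 2 := fun i j m => by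
      rw [hsymm m j i, pow_two]
    simp only [hsq]
    exact (sum_congr rfl fun _ _ => sum_comm).trans sum_comm
  simp only [hpoint, sum_add_distrib, ← mul_sum]
  rw [← hdiag]
  congr 2
  refine sum_congr rfl fun i _ => sum_congr rfl fun j _ => ?_
  rw [sum_comm]
  simp only [sum_ite_eq', mem_univ, if_true]

end Contraction

theorem contraction_II_c_general (n : ℕ)
    (ht : Fin n → Fin n → Fin n → ℝ)
    (hsymm₂ : ∀ i j k, ht i j k = ht i k j)
    (H : Fin n → ℝ) :
    let c : Fin n → Fin n → Fin n → ℝ := fun m i j =>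
      ((n : ℝ) / ((n : ℝ) + 2)) *
        (H m * (if i = j then (1 : ℝ) else 0) + H i * (if j = m then (1 : ℝ) else 0)
          + H j * (if i = m then (1 : ℝ) else 0))
    ∑ i, ∑ j, ∑ k, ∑ l, ∑ m, ∑ t, ht m i j * ht m l i * c t l k * c t k j
      = (2 * (n : ℝ) ^ 2 / ((n : ℝ) + 2) ^ 2) * (∑ m, ∑ i, ∑ j, (ht m i j) ^ 2) * (∑ i, (H i) ^ 2)
        + (((n : ℝ) + 6) * (n : ℝ) ^ 2 / ((n : ℝ) + 2) ^ 2) *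
          ∑ i, ∑ j, ∑ l, ∑ m, ht m i j * ht m l i * H j * H l := by
  intro c
  set a : ℝ := (n : ℝ) / ((n : ℝ) + 2)
  change ∑ i, ∑ j, ∑ k, ∑ l, ∑ m, ∑ t,
      ht m i j * ht m l i * (a * symmetrizedDelta H t l k) * (a * symmetrizedDelta H t k j) = _
  conv_lhs => simp only [mul_assoc (ht _ _ _ * ht _ _ _)]
  rw [sum_six_eq_sum_four_mul_sum_two (fun i j l m => ht m i j * ht m l i)]
  simp only [sum_smul_symmetrizedDelta_mul_smul_symmetrizedDelta, mul_add (a ^ 2),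
    ← mul_assoc (a ^ 2), Fintype.card_fin]
  rw [sum_contract_delta_add_outer ht hsymm₂, div_pow]
  ring

theorem contraction_II_c (n : ℕ) (hn : 1 ≤ n)
    (ht : Fin n → Fin n → Fin n → ℝ)
    (hsymm₁ : ∀ i j k, ht i j k = ht j i k)
    (hsymm₂ : ∀ i j k, ht i j k = ht i k j)
    (htf : ∀ k, ∑ i, ht i i k = 0)
    (H : Fin n → ℝ) :
    let c : Fin n → Fin n → Fin n → ℝ := fun m i j =>
      ((n : ℝ) / ((n : ℝ) + 2)) *
        (H m * (if i = j then (1 : ℝ) else 0) + H i * (if j = m then (1 : ℝ) else 0)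
          + H j * (if i = m then (1 : ℝ) else 0))
    ∑ i, ∑ j, ∑ k, ∑ l, ∑ m, ∑ t, ht m i j * ht m l i * c t l k * c t k j
      = (2 * (n : ℝ) ^ 2 / ((n : ℝ) + 2) ^ 2) * (∑ m, ∑ i, ∑ j, (ht m i j) ^ 2) * (∑ i, (H i) ^ 2)
        + (((n : ℝ) + 6) * (n : ℝ) ^ 2 / ((n : ℝ) + 2) ^ 2) *
          ∑ i, ∑ j, ∑ l, ∑ m, ht m i j * ht m l i * H j * H l :=
  contraction_II_c_general n ht hsymm₂ H
end
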